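/- Let ψ : [1,∞) → (0,∞) be positive, continuous, convex and decreasing with Σ_{k=1}^∞ ψ(k) < ∞. Let g(t) = ψ(t)t, suppose g is decreasing with g(t)/(t|g'(t+0)|) ≥ α_n := inf_{t≥n} α(g;t) > 0 for t ≥ n, and suppose lim_{t→∞} g(t)/(t|g'(t+0)|) = ∞. Then ψ(n)·n = o(Σ_{k=n}^∞ ψ(k)) as n → ∞, i.e. lim_{n→∞} ψ(n)n / Σ_{k=n}^∞ ψ(k) = 0. -/

import Mathlib

open Set Filter

/-!
Once `α(g;t) ≥ A`, the right derivative satisfies `g' ≥ -g/(A t)`, so `g(t) t^(1/A)` is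
nondecreasing beyond some `T`. Hence `ψ(t) ≥ g(n) n^(1/A) t^(-1-1/A)` for `t ≥ n ≥ T`, and comparing
the tail with `∫_n^∞ t^(-1-1/A) dt = A n^(-1/A)` gives `∑_{k ≥ n} ψ(k) ≥ A g(n) = A ψ(n) n`.
-/

theorem monotoneOn_of_hasDerivWithinAt_Ici_nonneg {f f' : ℝ → ℝ} {s : Set ℝ}
    (hs : s.OrdConnected) (hf : ContinuousOn f s)
    (hf' : ∀ x ∈ s, HasDerivWithinAt f (f' x) (Ici x) x) (hf'_nonneg : ∀ x ∈ s, 0 ≤ f' x) :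
    MonotoneOn f s := by
  intro a ha b hb hab
  have hIcc : Icc a b ⊆ s := hs.out ha hb
  exact image_le_of_deriv_right_le_deriv_boundary (f' := 0) continuousOn_const
    (fun x _ => hasDerivWithinAt_const x _ _) le_rfl (hf.mono hIcc)
    (fun x hx => hf' x (hIcc (Ico_subset_Icc_self hx)))
    (fun x hx => hf'_nonneg x (hIcc (Ico_subset_Icc_self hx))) (right_mem_Icc.2 hab)

theorem monotoneOn_mul_rpow_of_hasDerivWithinAt {g g' : ℝ → ℝ} {T p : ℝ} (hT : 0 < T)
    (hg : ContinuousOn g (Ici T)) (hg' : ∀ t ∈ Ici T, HasDerivWithinAt g (g' t) (Ici t) t)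
    (hg'_ge : ∀ t ∈ Ici T, -(p * g t / t) ≤ g' t) :
    MonotoneOn (fun t => g t * t ^ p) (Ici T) := by
  have hpos : ∀ t ∈ Ici T, 0 < t := fun t ht => hT.trans_le ht
  refine monotoneOn_of_hasDerivWithinAt_Ici_nonneg ordConnected_Ici
    (hg.mul (continuousOn_id.rpow_const fun t ht => Or.inl (hpos t ht).ne'))
    (fun t ht => (hg' t ht).mul
      (Real.hasDerivAt_rpow_const (Or.inl (hpos t ht).ne')).hasDerivWithinAt)
    fun t ht => ?_
  have ht0 := hpos t ht
  calc (0 : ℝ) ≤ t ^ p * (g' t + p * g t / t) :=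
        mul_nonneg (Real.rpow_nonneg ht0.le p) (by linarith [hg'_ge t ht])
    _ = g' t * t ^ p + g t * (p * t ^ (p - 1)) := by rw [Real.rpow_sub_one ht0.ne']; ring

theorem neg_inv_mul_div_le_of_le_div_mul_abs {a t d A : ℝ} (ht : 0 < t) (hA : 0 < A)
    (h : A ≤ a / (t * |d|)) : -(A⁻¹ * a / t) ≤ d := by
  have hd : d ≠ 0 := by rintro rfl; simp at h; linarith
  have hden : 0 < t * |d| := mul_pos ht (abs_pos.2 hd)
  have ha : A * (t * |d|) ≤ a := (le_div_iff₀ hden).1 h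
  rw [neg_le]
  calc -d ≤ |d| := neg_le_abs d
    _ = A⁻¹ * (A * (t * |d|)) / t := by field_simp
    _ ≤ A⁻¹ * a / t := by gcongr

theorem rpow_neg_div_le_tsum_rpow {p : ℝ} (hp : 0 < p) {N : ℕ} (hN : 0 < N) :
    (N : ℝ) ^ (-p) / p ≤ ∑' k : ℕ, ((N : ℝ) + k) ^ (-(1 + p)) := by
  have hN' : (0 : ℝ) < N := Nat.cast_pos.2 hN
  have anti : AntitoneOn (fun x : ℝ => x ^ (-(1 + p))) (Ici (N : ℝ)) := fun x hx y _ hxy =>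
    Real.rpow_le_rpow_of_nonpos (hN'.trans_le hx) hxy (by linarith)
  have h := anti.integral_le_tsum_comp_add N (Real.summable_nat_rpow.2 (by linarith))
    fun t ht => Real.rpow_nonneg (hN'.trans ht).le _
  rw [integral_Ioi_rpow_of_lt (by linarith) hN', show -(1 + p) + 1 = -p by ring,
    neg_div_neg_eq] at h
  convert h using 3 with k
  rw [Nat.cast_add, add_comm]


theorem monotoneOn_mul_rpow_inv_of_le_div_mul_abs_derivWithin {g : ℝ → ℝ} {T A : ℝ}
    (hT : 0 < T) (hA : 0 < A) (hg : ContinuousOn g (Ici T))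
    (hα : ∀ t ∈ Ici T, A ≤ g t / (t * |derivWithin g (Ici t) t|)) :
    MonotoneOn (fun t => g t * t ^ A⁻¹) (Ici T) := by
  refine monotoneOn_mul_rpow_of_hasDerivWithinAt hT hg (fun t ht => ?_)
    fun t ht => neg_inv_mul_div_le_of_le_div_mul_abs (hT.trans_le ht) hA (hα t ht)
  -- a vanishing derivative would make the ratio `g t / 0 = 0 < A`
  refine (differentiableWithinAt_of_derivWithin_ne_zero fun h0 => ?_).hasDerivWithinAt
  have := hα t ht
  simp only [h0, abs_zero, mul_zero, div_zero] at this
  linarith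

theorem inv_mul_le_tsum_of_monotoneOn_mul_rpow {ψ g : ℝ → ℝ} (hg : ∀ t, g t = ψ t * t)
    {p : ℝ} (hp : 0 < p) {N : ℕ} (hN : 0 < N) (hψN : 0 ≤ ψ N)
    (hψ : Summable fun k : ℕ => ψ (N + k)) (hmono : MonotoneOn (fun t => g t * t ^ p) (Ici N)) :
    p⁻¹ * g N ≤ ∑' k : ℕ, ψ (N + k) := by
  have hN' : (0 : ℝ) < N := Nat.cast_pos.2 hN
  set c := g N * (N : ℝ) ^ p
  have hc : 0 ≤ c := mul_nonneg (by rw [hg]; positivity) (Real.rpow_nonneg hN'.le p)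
  have hterm : ∀ k : ℕ, c * ((N : ℝ) + k) ^ (-(1 + p)) ≤ ψ (N + k) := fun k => by
    have ht : (0 : ℝ) < N + k := by positivity
    calc c * ((N : ℝ) + k) ^ (-(1 + p))
        ≤ g (N + k) * ((N : ℝ) + k) ^ p * ((N : ℝ) + k) ^ (-(1 + p)) := by
          gcongr
          exact hmono self_mem_Ici (mem_Ici.2 (by simp)) (by simp)
      _ = ψ (N + k) := by
          rw [mul_assoc, ← Real.rpow_add ht, show p + -(1 + p) = -1 by ring, Real.rpow_neg_one,
            hg]
          field_simp
  have hsum : Summable fun k : ℕ => ((N : ℝ) + k) ^ (-(1 + p)) := by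
    have hexp : -(1 + p) < -1 := by linarith
    exact ((summable_nat_add_iff N).2 (Real.summable_nat_rpow.2 hexp)).congr fun k => by
      rw [Nat.cast_add, add_comm]
  calc p⁻¹ * g N = c * ((N : ℝ) ^ (-p) / p) := by
        simp only [c, Real.rpow_neg hN'.le]
        field_simp
    _ ≤ c * ∑' k : ℕ, ((N : ℝ) + k) ^ (-(1 + p)) :=
        mul_le_mul_of_nonneg_left (rpow_neg_div_le_tsum_rpow hp hN) hc
    _ = ∑' k : ℕ, c * ((N : ℝ) + k) ^ (-(1 + p)) := (hsum.tsum_mul_left c).symm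
    _ ≤ ∑' k : ℕ, ψ (N + k) := Summable.tsum_le_tsum hterm (hsum.mul_left c) hψ

theorem stmt_13_general (ψ : ℝ → ℝ)
    (hψpos : ∀ t ∈ Ici (1 : ℝ), 0 < ψ t)
    (hψcont : ContinuousOn ψ (Ici (1 : ℝ)))
    (hsum : Summable (fun k : ℕ => ψ k))
    (g : ℝ → ℝ) (hg : ∀ t, g t = ψ t * t)
    (hlim : Tendsto (fun t : ℝ => g t / (t * |derivWithin g (Ici t) t|))
      atTop atTop) :
    Tendsto (fun n : ℕ => ψ n * n / ∑' k : ℕ, ψ (n + k)) atTop (nhds 0) := by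
  have hgcont : ContinuousOn g (Ici 1) :=
    (hψcont.mul continuousOn_id).congr fun t _ => hg t
  have hgpos : ∀ n : ℕ, 1 ≤ n → 0 < g n := fun n hn => by
    rw [hg]; exact mul_pos (hψpos n (mem_Ici.2 (mod_cast hn))) (by positivity)
  have htail : ∀ A > 0, ∀ᶠ n : ℕ in atTop, A * g n ≤ ∑' k : ℕ, ψ (n + k) := by
    intro A hA
    obtain ⟨T, hT⟩ := eventually_atTop.1 (hlim.eventually_ge_atTop A)
    have hmono := monotoneOn_mul_rpow_inv_of_le_div_mul_abs_derivWithin (T := max T 1)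
      (by positivity) hA (hgcont.mono (Ici_subset_Ici.2 (le_max_right _ _)))
      fun t ht => hT t ((le_max_left _ _).trans ht)
    filter_upwards [eventually_ge_atTop ⌈max T 1⌉₊] with n hn
    have hn' : max T 1 ≤ n := Nat.ceil_le.1 hn
    have hn1 : 1 ≤ n := Nat.one_le_cast.1 ((le_max_right _ _).trans hn')
    simpa only [inv_inv] using inv_mul_le_tsum_of_monotoneOn_mul_rpow hg (inv_pos.2 hA) hn1
      (hψpos n (mem_Ici.2 (mod_cast hn1))).le
      (((summable_nat_add_iff n).2 hsum).congr fun k => by rw [Nat.cast_add, add_comm])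
      (hmono.mono (Ici_subset_Ici.2 hn'))
  have hratio : Tendsto (fun n : ℕ => (∑' k : ℕ, ψ (n + k)) / g n) atTop atTop := by
    refine tendsto_atTop.2 fun b => ?_
    filter_upwards [htail (max b 1) (by positivity), eventually_ge_atTop 1] with n hn hn1
    exact (le_max_left b 1).trans ((le_div_iff₀ (hgpos n hn1)).2 hn)
  refine hratio.inv_tendsto_atTop.congr fun n => ?_
  simp only [Pi.inv_apply, inv_div, hg]

/-- If the characteristic `α(g;t) = g(t)/(t |g'(t+0)|)` of `g(t) = ψ(t) t` is positive and
tends to infinity, then `ψ(n) n = o(∑_{k=n}^∞ ψ(k))` as `n → ∞`. -/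
theorem stmt_13 (ψ : ℝ → ℝ)
    (hψpos : ∀ t ∈ Ici (1 : ℝ), 0 < ψ t)
    (hψcont : ContinuousOn ψ (Ici (1 : ℝ)))
    (hψconv : ConvexOn ℝ (Ici (1 : ℝ)) ψ)
    (hψdec : AntitoneOn ψ (Ici (1 : ℝ)))
    (hsum : Summable (fun k : ℕ => ψ k))
    (g : ℝ → ℝ) (hg : ∀ t, g t = ψ t * t)
    (hgdec : AntitoneOn g (Ici (1 : ℝ)))
    (hpos : ∀ t : ℝ, 1 ≤ t → 0 < g t / (t * |derivWithin g (Ici t) t|))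
    (hlim : Tendsto (fun t : ℝ => g t / (t * |derivWithin g (Ici t) t|))
      atTop atTop) :
    Tendsto (fun n : ℕ => ψ n * n / ∑' k : ℕ, ψ (n + k)) atTop (nhds 0) :=
  stmt_13_general ψ hψpos hψcont hsum g hg hlim
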